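/- arXiv:2605.02253 — 6 statements merged into one kernel-verified Lean document; each statement's English description precedes it below -/
import Mathlib

section
/- Let τ ∈ (0,1), D > 0, and let ε be a real random variable whose law is dominated by D times Lebesgue measure. Then for every u ∈ ℝ, E[(ψ_τ(ε + u) − ψ_τ(ε − u))²] ≤ 2D|u|. -/
/-! The two scores differ exactly when `ε + u` and `ε - u` lie on opposite sides of `0`, i.e. when
`ε ∈ [-|u|, |u|)`, and then their difference is `±1`. So the expectation is
`P(ε ∈ [-|u|, |u|)) ≤ D · 2|u|`. -/

open MeasureTheory

/-- The quantile score `ψ_τ(v) = τ − 1{v < 0}`. -/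
noncomputable def quantileScore (τ v : ℝ) : ℝ := τ - if v < 0 then 1 else 0

theorem quantileScore_add_sub_quantileScore_sub_sq (τ v u : ℝ) :
    (quantileScore τ (v + u) - quantileScore τ (v - u)) ^ 2
      = (Set.Ico (-|u|) |u|).indicator 1 v := by
  simp only [quantileScore, Set.indicator, Set.mem_Ico, Pi.one_apply]
  split_ifs <;> grind

theorem measureReal_preimage_le_mul_volumeReal {Ω : Type*} [MeasurableSpace Ω] {P : Measure Ω}
    {D : ℝ} (hD : 0 ≤ D) {ε : Ω → ℝ}
    (hdom : ∀ B : Set ℝ, MeasurableSet B → P (ε ⁻¹' B) ≤ ENNReal.ofReal D * volume B)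
    {B : Set ℝ} (hB : MeasurableSet B) (hB_fin : volume B ≠ ⊤) :
    P.real (ε ⁻¹' B) ≤ D * volume.real B := by
  refine ENNReal.toReal_le_of_le_ofReal (by positivity) ?_
  rw [ENNReal.ofReal_mul hD, ofReal_measureReal hB_fin]
  exact hdom B hB

theorem stmt_4_general {Ω : Type*} [MeasurableSpace Ω] (P : Measure Ω)
    (τ D : ℝ) (hD : 0 < D)
    (ε : Ω → ℝ) (hε : Measurable ε)
    (hdom : ∀ B : Set ℝ, MeasurableSet B →
      P (ε ⁻¹' B) ≤ ENNReal.ofReal D * volume B)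
    (u : ℝ) :
    ∫ ω, (quantileScore τ (ε ω + u) - quantileScore τ (ε ω - u)) ^ 2 ∂P
      ≤ 2 * D * |u| := by
  simp_rw [quantileScore_add_sub_quantileScore_sub_sq, ← Set.indicator_comp_right, Pi.one_comp]
  rw [integral_indicator_one (hε measurableSet_Ico)]
  calc P.real (ε ⁻¹' Set.Ico (-|u|) |u|) ≤ D * volume.real (Set.Ico (-|u|) |u|) :=
        measureReal_preimage_le_mul_volumeReal hD.le hdom measurableSet_Ico measure_Ico_lt_top.ne
    _ = 2 * D * |u| := by
        rw [Real.volume_real_Ico_of_le (by linarith [abs_nonneg u])]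
        ring

/-- if the law of `ε` is dominated by `D` times Lebesgue measure, then
for every `u ∈ ℝ`, `E[(ψ_τ(ε + u) − ψ_τ(ε − u))²] ≤ 2D|u|`. -/
theorem stmt_4 {Ω : Type*} [MeasurableSpace Ω] (P : Measure Ω) [IsProbabilityMeasure P]
    (τ D : ℝ) (hτ : τ ∈ Set.Ioo (0 : ℝ) 1) (hD : 0 < D)
    (ε : Ω → ℝ) (hε : Measurable ε)
    (hdom : ∀ B : Set ℝ, MeasurableSet B →
      P (ε ⁻¹' B) ≤ ENNReal.ofReal D * volume B)
    (u : ℝ) :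
    ∫ ω, (quantileScore τ (ε ω + u) - quantileScore τ (ε ω - u)) ^ 2 ∂P
      ≤ 2 * D * |u| :=
  stmt_4_general P τ D hD ε hε hdom u
end

section
/- Let τ ∈ (0,1) and let ε, ε′ be real random variables on a common probability space with E|ε − ε′| < ∞. Then for every η > 0, E[(ψ_τ(ε) − ψ_τ(ε′))⁴] ≤ P(|ε| ≤ η) + η^{−1}·E|ε − ε′|. -/
/-!
`(ψ_τ(ε) − ψ_τ(ε′))⁴` is the indicator that `ε` and `ε′` lie on different sides of `0`. Off the
event `|ε| ≤ η` such a sign change forces `|ε − ε′| ≥ |ε| > η`, so the indicator is at most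
`1{|ε| ≤ η} + η⁻¹ |ε − ε′|`; integrating this pointwise bound gives the claim.
-/

open MeasureTheory

theorem quantileScore_sub_pow_four (τ a b : ℝ) :
    (quantileScore τ a - quantileScore τ b) ^ 4 = if (a < 0 ↔ b < 0) then 0 else 1 := by
  unfold quantileScore
  by_cases ha : a < 0 <;> by_cases hb : b < 0 <;> norm_num [ha, hb]

theorem abs_le_abs_sub_of_not_neg_iff {a b : ℝ} (h : ¬(a < 0 ↔ b < 0)) : |a| ≤ |a - b| := by
  rcases lt_or_ge a 0 with ha | ha
  · have hb : 0 ≤ b := le_of_not_gt fun hb => h ⟨fun _ => hb, fun _ => ha⟩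
    rw [abs_of_neg ha, abs_of_nonpos (by linarith)]
    linarith
  · have hb : b < 0 :=
      by_contra fun hb => h ⟨fun ha' => absurd ha' ha.not_gt, fun hb' => absurd hb' hb⟩
    rw [abs_of_nonneg ha, abs_of_nonneg (by linarith)]
    linarith

theorem quantileScore_sub_pow_four_le (τ : ℝ) {η : ℝ} (hη : 0 < η) (a b : ℝ) :
    (quantileScore τ a - quantileScore τ b) ^ 4
      ≤ {x : ℝ | |x| ≤ η}.indicator 1 a + η⁻¹ * |a - b| := by
  have hind : 0 ≤ {x : ℝ | |x| ≤ η}.indicator (1 : ℝ → ℝ) a :=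
    Set.indicator_nonneg (fun _ _ => zero_le_one) a
  have hdist : 0 ≤ η⁻¹ * |a - b| := by positivity
  rw [quantileScore_sub_pow_four]
  split_ifs with hsign
  · exact add_nonneg hind hdist
  by_cases ha : |a| ≤ η
  · rw [Set.indicator_of_mem (show a ∈ {x : ℝ | |x| ≤ η} from ha)]
    simpa using hdist
  · have : 1 ≤ η⁻¹ * |a - b| :=
      (one_le_inv_mul₀ hη).2 ((not_le.1 ha).le.trans (abs_le_abs_sub_of_not_neg_iff hsign))
    linarith

theorem integral_le_measureReal_add_integral {Ω : Type*} [MeasurableSpace Ω] {μ : Measure Ω}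
    [IsFiniteMeasure μ] {f g : Ω → ℝ} {s : Set Ω} (hf : 0 ≤ f) (hg : Integrable g μ)
    (hfg : ∀ ω, f ω ≤ s.indicator 1 ω + g ω) :
    ∫ ω, f ω ∂μ ≤ μ.real s + ∫ ω, g ω ∂μ := by
  have hs := measurableSet_toMeasurable μ s
  have hind : Integrable ((toMeasurable μ s).indicator (1 : Ω → ℝ)) μ :=
    (integrable_const 1).indicator hs
  calc ∫ ω, f ω ∂μ ≤ ∫ ω, (toMeasurable μ s).indicator 1 ω + g ω ∂μ := by
        refine integral_mono_of_nonneg (.of_forall hf) (hind.add hg) (.of_forall fun ω => ?_)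
        refine (hfg ω).trans (add_le_add_left ?_ _)
        exact Set.indicator_le_indicator_of_subset (subset_toMeasurable μ s)
          (fun _ => zero_le_one) ω
    _ = μ.real s + ∫ ω, g ω ∂μ := by
        rw [integral_add hind hg, integral_indicator_one hs, measureReal_def, measureReal_def,
          measure_toMeasurable]

theorem stmt_5_general {Ω : Type*} [MeasurableSpace Ω] (P : Measure Ω) [IsProbabilityMeasure P]
    (τ : ℝ)
    (ε ε' : Ω → ℝ)
    (hint : Integrable (fun ω => |ε ω - ε' ω|) P)
    (η : ℝ) (hη : 0 < η) :
    ∫ ω, (quantileScore τ (ε ω) - quantileScore τ (ε' ω)) ^ 4 ∂P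
      ≤ (P {ω | |ε ω| ≤ η}).toReal + η⁻¹ * ∫ ω, |ε ω - ε' ω| ∂P := by
  rw [← integral_const_mul]
  exact integral_le_measureReal_add_integral (fun ω => by positivity) (hint.const_mul η⁻¹)
    fun ω => quantileScore_sub_pow_four_le τ hη (ε ω) (ε' ω)

/-- for real random variables `ε, ε′` on a common probability space with
`E|ε − ε′| < ∞`, and every `η > 0`,
`E[(ψ_τ(ε) − ψ_τ(ε′))⁴] ≤ P(|ε| ≤ η) + η⁻¹·E|ε − ε′|`. -/
theorem stmt_5 {Ω : Type*} [MeasurableSpace Ω] (P : Measure Ω) [IsProbabilityMeasure P]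
    (τ : ℝ) (hτ : τ ∈ Set.Ioo (0 : ℝ) 1)
    (ε ε' : Ω → ℝ) (hε : Measurable ε) (hε' : Measurable ε')
    (hint : Integrable (fun ω => |ε ω - ε' ω|) P)
    (η : ℝ) (hη : 0 < η) :
    ∫ ω, (quantileScore τ (ε ω) - quantileScore τ (ε' ω)) ^ 4 ∂P
      ≤ (P {ω | |ε ω| ≤ η}).toReal + η⁻¹ * ∫ ω, |ε ω - ε' ω| ∂P :=
  stmt_5_general P τ ε ε' hint η hη
end

section
/- Let c > 0 and let ε be a real random variable on a probability space (Ω, P). Then for every x ∈ ℝ, E[ψ_c(ε + x) − ψ_c(ε)] = ∫_0^x P(−c < ε + t < c) dt, where the right-hand side is the oriented integral over the interval from 0 to x. -/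
/-!
On `[-c, c]` the Huber score is the identity and outside it is constant, so `ψ_c` is a
primitive of the indicator of `(-c, c)`: the fundamental theorem of calculus tolerates the
countably many points `±c` where `ψ_c` is not differentiable, so the open interval, and no
statement about atoms of `ε`, appears. Hence
`ψ_c(ε + x) - ψ_c(ε) = ∫_0^x 1{-c < ε + t < c} dt` pointwise, and taking expectations and
swapping the integrals (the integrand is bounded) gives the probability under the `dt`-integral.
-/

open MeasureTheory

/-- The Huber score `ψ_c(v) = v` if `|v| ≤ c`, and `ψ_c(v) = c·sign(v)` if `|v| > c`. -/
noncomputable def huberScore (c v : ℝ) : ℝ := if |v| ≤ c then v else c * Real.sign v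

open Set

lemma huberScore_eq_max_min {c : ℝ} (hc : 0 ≤ c) (v : ℝ) :
    huberScore c v = max (-c) (min v c) := by
  unfold huberScore
  split_ifs with h
  · rcases abs_le.1 h with ⟨h₁, h₂⟩
    rw [min_eq_left h₂, max_eq_right h₁]
  · rcases lt_or_ge v 0 with hv | hv
    · rw [abs_of_neg hv] at h
      rw [Real.sign_of_neg hv, min_eq_left (by linarith), max_eq_left (by linarith), mul_neg_one]
    · rw [abs_of_nonneg hv] at h
      rw [Real.sign_of_pos (by linarith), min_eq_right (by linarith), max_eq_right (by linarith),
        mul_one]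

lemma continuous_huberScore {c : ℝ} (hc : 0 ≤ c) : Continuous (huberScore c) := by
  rw [funext (huberScore_eq_max_min hc)]
  fun_prop

lemma hasDerivAt_huberScore {c v : ℝ} (hc : 0 ≤ c) (hv₁ : v ≠ -c) (hv₂ : v ≠ c) :
    HasDerivAt (huberScore c) ((Ioo (-c) c).indicator 1 v) v := by
  simp_rw [funext (huberScore_eq_max_min hc)]
  rcases lt_or_gt_of_ne hv₁ with h₁ | h₁
  · rw [indicator_of_notMem (fun h => (h₁.trans h.1).false)]
    refine (hasDerivAt_const v (-c)).congr_of_eventuallyEq ?_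
    filter_upwards [Iio_mem_nhds h₁] with y hy
    rw [min_eq_left (by linarith [mem_Iio.1 hy]), max_eq_left (mem_Iio.1 hy).le]
  rcases lt_or_gt_of_ne hv₂ with h₂ | h₂
  · rw [indicator_of_mem (show v ∈ Ioo (-c) c from ⟨h₁, h₂⟩), Pi.one_apply]
    refine (hasDerivAt_id v).congr_of_eventuallyEq ?_
    filter_upwards [Ioo_mem_nhds h₁ h₂] with y hy
    rw [min_eq_left hy.2.le, max_eq_right hy.1.le, id]
  · rw [indicator_of_notMem (fun h => (h₂.trans h.2).false)]
    refine (hasDerivAt_const v c).congr_of_eventuallyEq ?_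
    filter_upwards [Ioi_mem_nhds h₂] with y hy
    rw [min_eq_right (mem_Ioi.1 hy).le, max_eq_right (by linarith [mem_Ioi.1 hy])]

lemma huberScore_add_sub {c : ℝ} (hc : 0 ≤ c) (e x : ℝ) :
    huberScore c (e + x) - huberScore c e
      = ∫ t in (0 : ℝ)..x, (Ioo (-c) c).indicator 1 (e + t) := by
  rw [intervalIntegral.integral_comp_add_left, add_zero]
  refine (integral_eq_of_hasDerivAt_off_countable _ _ ((countable_singleton (-c)).insert c)
    (continuous_huberScore hc).continuousOn (fun v hv => ?_) ?_).symm
  · have hv : v ≠ c ∧ v ≠ -c := by simpa using hv.2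
    exact hasDerivAt_huberScore hc hv.2 hv.1
  · exact intervalIntegrable_const.mono_fun
      (measurable_const.indicator measurableSet_Ioo).aestronglyMeasurable
      (ae_of_all _ fun _ => norm_indicator_le_norm_self _ _)

lemma integral_intervalIntegral_indicator_add {Ω : Type*} [MeasurableSpace Ω] (μ : Measure Ω)
    [IsFiniteMeasure μ] {X : Ω → ℝ} (hX : Measurable X) {s : Set ℝ} (hs : MeasurableSet s)
    (a b : ℝ) :
    ∫ ω, (∫ t in a..b, s.indicator 1 (X ω + t)) ∂μ = ∫ t in a..b, μ.real {ω | X ω + t ∈ s} := by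
  rw [← intervalIntegral_integral_swap]
  · congr with t
    exact integral_indicator_one (hX.add_const t hs)
  · have : IsFiniteMeasure (volume.restrict (uIoc a b)) :=
      isFiniteMeasure_restrict.2 measure_Ioc_lt_top.ne
    refine .of_bound (((measurable_one.indicator hs).comp
      ((hX.comp measurable_snd).add measurable_fst)).aestronglyMeasurable) 1
      (ae_of_all _ fun _ => (norm_indicator_le_norm_self _ _).trans_eq norm_one)

/-- for `c > 0` and a real random variable `ε`, for every `x ∈ ℝ`,
`E[ψ_c(ε + x) − ψ_c(ε)] = ∫_0^x P(−c < ε + t < c) dt` (oriented integral). -/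
theorem stmt_7 {Ω : Type*} [MeasurableSpace Ω] (P : Measure Ω) [IsProbabilityMeasure P]
    (c : ℝ) (hc : 0 < c) (ε : Ω → ℝ) (hε : Measurable ε) (x : ℝ) :
    ∫ ω, (huberScore c (ε ω + x) - huberScore c (ε ω)) ∂P
      = ∫ t in (0 : ℝ)..x, (P {ω | -c < ε ω + t ∧ ε ω + t < c}).toReal := by
  simp_rw [huberScore_add_sub hc.le]
  exact integral_intervalIntegral_indicator_add P hε measurableSet_Ioo 0 x
end

section
/- Let ε be a real random variable whose law has a Lebesgue density f (a nonnegative measurable function with P(ε ∈ B) = ∫_B f(t) dt for every Borel set B ⊆ ℝ), and suppose f is Lipschitz with constant L on the interval [−δ, δ], where δ, L > 0. Then: (i) for every τ ∈ (0,1) and every x ∈ ℝ, E[ψ_τ(ε + x) − ψ_τ(ε)] = P(ε < 0) − P(ε < −x); and (ii) for every x with |x| ≤ δ, |P(ε < 0) − P(ε < −x) − f(0)·x| ≤ L·x²/2. -/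
open MeasureTheory

/-!
Since `ψ_τ(v + x) − ψ_τ(v) = 1{v < 0} − 1{v < −x}`, the level `τ` cancels and the expected
score increment is `P(ε < 0) − P(ε < −x) = ∫_{−x}^0 f`. On `[−x, 0] ⊆ [−δ, δ]` the Lipschitz
bound gives `|f t − f 0| ≤ L |t|`, and `∫_{−x}^0 L |t| dt = L x² / 2`.
-/

open Set NNReal

theorem quantileScore_add_sub (τ v x : ℝ) :
    quantileScore τ (v + x) - quantileScore τ v
      = (Iio 0).indicator 1 v - (Iio (-x)).indicator 1 v := by
  have hshift : v + x < 0 ↔ v < -x := by constructor <;> intro <;> linarith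
  simp only [quantileScore, indicator_apply, mem_Iio, Pi.one_apply, hshift]
  ring

theorem integral_quantileScore_add_sub {Ω : Type*} [MeasurableSpace Ω] (P : Measure Ω)
    [IsFiniteMeasure P] {ε : Ω → ℝ} (hε : Measurable ε) (τ x : ℝ) :
    ∫ ω, (quantileScore τ (ε ω + x) - quantileScore τ (ε ω)) ∂P
      = (P {ω | ε ω < 0}).toReal - (P {ω | ε ω < -x}).toReal := by
  have hlt (a : ℝ) : MeasurableSet (ε ⁻¹' Iio a) := hε measurableSet_Iio
  simp_rw [quantileScore_add_sub, ← indicator_comp_right ε (s := Iio _), Pi.one_comp]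
  rw [integral_sub ((integrable_const 1).indicator (hlt 0))
      ((integrable_const 1).indicator (hlt (-x))),
    integral_indicator_one (hlt 0), integral_indicator_one (hlt (-x)),
    measureReal_def, measureReal_def]
  rfl

theorem abs_intervalIntegral_sub_mul_le_of_lipschitzOnWith {f : ℝ → ℝ} {K : ℝ≥0} {a b : ℝ}
    (hf : LipschitzOnWith K f (uIcc a b)) :
    |(∫ t in a..b, f t) - f b * (b - a)| ≤ K * (b - a) ^ 2 / 2 := by
  have hlip : ∀ t ∈ uIoc a b, ‖f t - f b‖ ≤ K * |t - b| ^ 1 := fun t ht => by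
    simpa [Real.dist_eq] using
      hf.dist_le_mul t (uIoc_subset_uIcc ht) b right_mem_uIcc
  calc |(∫ t in a..b, f t) - f b * (b - a)| = ‖∫ t in a..b, (f t - f b)‖ := by
        rw [intervalIntegral.integral_sub hf.continuousOn.intervalIntegrable
          intervalIntegrable_const, intervalIntegral.integral_const, smul_eq_mul, mul_comm,
          Real.norm_eq_abs]
    _ ≤ ∫ t in uIoc a b, ‖f t - f b‖ := intervalIntegral.norm_integral_le_integral_norm_uIoc
    _ ≤ ∫ t in uIoc a b, K * |t - b| ^ 1 := by
        refine setIntegral_mono_on ?_ (by fun_prop : Continuous _).integrableOn_uIoc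
          measurableSet_uIoc hlip
        exact ((hf.continuousOn.sub continuousOn_const).norm.integrableOn_uIcc).mono_set
          uIoc_subset_uIcc
    _ = K * (b - a) ^ 2 / 2 := by
        rw [integral_const_mul, uIoc_comm, integral_pow_abs_sub_uIoc, sq_abs]
        ring

section Density

variable {Ω : Type*} [MeasurableSpace Ω] {P : Measure Ω} {ε : Ω → ℝ} {f : ℝ → ℝ}

def IsLebesgueDensity (f : ℝ → ℝ) (ε : Ω → ℝ) (P : Measure Ω) : Prop :=
  ∀ B : Set ℝ, MeasurableSet B → P (ε ⁻¹' B) = ∫⁻ t in B, ENNReal.ofReal (f t) ∂volume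

theorem IsLebesgueDensity.integrable [IsFiniteMeasure P] (hfmeas : Measurable f)
    (hfpos : ∀ t, 0 ≤ f t) (hdensity : IsLebesgueDensity f ε P) :
    Integrable f := by
  refine ⟨hfmeas.aestronglyMeasurable, ?_⟩
  rw [hasFiniteIntegral_iff_ofReal (.of_forall hfpos), ← setLIntegral_univ,
    ← hdensity univ MeasurableSet.univ]
  exact measure_lt_top P _

theorem toReal_measure_lt_eq_setIntegral (hfmeas : Measurable f) (hfpos : ∀ t, 0 ≤ f t)
    (hdensity : IsLebesgueDensity f ε P) (a : ℝ) :
    (P {ω | ε ω < a}).toReal = ∫ t in Iio a, f t := by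
  rw [integral_eq_lintegral_of_nonneg_ae (.of_forall hfpos)
    hfmeas.aestronglyMeasurable.restrict, ← hdensity _ measurableSet_Iio]
  rfl

theorem toReal_measure_lt_sub_eq_intervalIntegral [IsFiniteMeasure P] (hfmeas : Measurable f)
    (hfpos : ∀ t, 0 ≤ f t) (hdensity : IsLebesgueDensity f ε P) (a b : ℝ) :
    (P {ω | ε ω < b}).toReal - (P {ω | ε ω < a}).toReal = ∫ t in a..b, f t := by
  have hf := hdensity.integrable hfmeas hfpos
  rw [toReal_measure_lt_eq_setIntegral hfmeas hfpos hdensity,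
    toReal_measure_lt_eq_setIntegral hfmeas hfpos hdensity,
    setIntegral_congr_set Iio_ae_eq_Iic, setIntegral_congr_set Iio_ae_eq_Iic,
    intervalIntegral.integral_Iic_sub_Iic hf.integrableOn hf.integrableOn]

end Density

theorem stmt_8_general {Ω : Type*} [MeasurableSpace Ω] (P : Measure Ω) [IsProbabilityMeasure P]
    (ε : Ω → ℝ) (hε : Measurable ε)
    (f : ℝ → ℝ) (hfmeas : Measurable f) (hfpos : ∀ t, 0 ≤ f t)
    (hdensity : ∀ B : Set ℝ, MeasurableSet B →
      P (ε ⁻¹' B) = ∫⁻ t in B, ENNReal.ofReal (f t) ∂volume)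
    (δ L : ℝ) (hL : 0 < L)
    (hLip : LipschitzOnWith (Real.toNNReal L) f (Set.Icc (-δ) δ)) :
    (∀ τ ∈ Set.Ioo (0 : ℝ) 1, ∀ x : ℝ,
      ∫ ω, (quantileScore τ (ε ω + x) - quantileScore τ (ε ω)) ∂P
        = (P {ω | ε ω < 0}).toReal - (P {ω | ε ω < -x}).toReal) ∧
    (∀ x : ℝ, |x| ≤ δ →
      |(P {ω | ε ω < 0}).toReal - (P {ω | ε ω < -x}).toReal - f 0 * x|
        ≤ L * x ^ 2 / 2) := by
  refine ⟨fun τ _ x => integral_quantileScore_add_sub P hε τ x, fun x hx => ?_⟩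
  obtain ⟨hx₁, hx₂⟩ := abs_le.mp hx
  have hsub : uIcc (-x) 0 ⊆ Icc (-δ) δ :=
    uIcc_subset_Icc ⟨by linarith, by linarith⟩ ⟨by linarith, by linarith⟩
  have h := abs_intervalIntegral_sub_mul_le_of_lipschitzOnWith (hLip.mono hsub)
  rwa [Real.coe_toNNReal L hL.le, zero_sub, neg_neg,
    ← toReal_measure_lt_sub_eq_intervalIntegral hfmeas hfpos hdensity] at h

/-- let `ε` have a Lebesgue density `f` which is Lipschitz with constant `L`
on `[−δ, δ]` (`δ, L > 0`). Then (i) for every `τ ∈ (0,1)` and every `x`,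
`E[ψ_τ(ε + x) − ψ_τ(ε)] = P(ε < 0) − P(ε < −x)`; and (ii) for every `|x| ≤ δ`,
`|P(ε < 0) − P(ε < −x) − f(0)·x| ≤ L·x²/2`. -/
theorem stmt_8 {Ω : Type*} [MeasurableSpace Ω] (P : Measure Ω) [IsProbabilityMeasure P]
    (ε : Ω → ℝ) (hε : Measurable ε)
    (f : ℝ → ℝ) (hfmeas : Measurable f) (hfpos : ∀ t, 0 ≤ f t)
    (hdensity : ∀ B : Set ℝ, MeasurableSet B →
      P (ε ⁻¹' B) = ∫⁻ t in B, ENNReal.ofReal (f t) ∂volume)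
    (δ L : ℝ) (hδ : 0 < δ) (hL : 0 < L)
    (hLip : LipschitzOnWith (Real.toNNReal L) f (Set.Icc (-δ) δ)) :
    (∀ τ ∈ Set.Ioo (0 : ℝ) 1, ∀ x : ℝ,
      ∫ ω, (quantileScore τ (ε ω + x) - quantileScore τ (ε ω)) ∂P
        = (P {ω | ε ω < 0}).toReal - (P {ω | ε ω < -x}).toReal) ∧
    (∀ x : ℝ, |x| ≤ δ →
      |(P {ω | ε ω < 0}).toReal - (P {ω | ε ω < -x}).toReal - f 0 * x|
        ≤ L * x ^ 2 / 2) :=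
  stmt_8_general P ε hε f hfmeas hfpos hdensity δ L hL hLip
end

section
/- Let 1 < q < 2. There exists a constant C_q > 0 such that for all real ε and u: (i) if |ε| > 2|u| then |ψ_q(ε + u) − ψ_q(ε − u)| ≤ C_q·|u|·|ε|^{q−2}; (ii) if |ε| ≤ 2|u| then |ψ_q(ε + u) − ψ_q(ε − u)| ≤ C_q·|u|^{q−1}. -/
/-!
Since `ψ_q` is odd, it suffices to treat `ε > 0`. If `|ε| > 2|u|`, both `ε ± u` lie in
`[ε/2, ∞)`, where `ψ_q(x) = q x^{q-1}` has derivative `q(q-1)x^{q-2} ≤ q(q-1)(ε/2)^{q-2}`, so the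
mean value theorem gives a bound of order `|u| ε^{q-2}`. If `|ε| ≤ 2|u|`, then `|ε ± u| ≤ 3|u|` and
the triangle inequality with `|ψ_q(v)| ≤ q|v|^{q-1}` suffices.
-/

/-- The `L_q` score `ψ_q(v) = q·|v|^{q−1}·sign(v)` (with `ψ_q(0) = 0`). -/
noncomputable def lqScore (q v : ℝ) : ℝ := q * |v| ^ (q - 1) * Real.sign v

theorem abs_rpow_sub_rpow_le_of_le {p m a b : ℝ} (hp : p ≤ 1) (hm : 0 < m) (ha : m ≤ a)
    (hb : m ≤ b) : |a ^ p - b ^ p| ≤ |p| * m ^ (p - 1) * |a - b| := by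
  have hderiv : ∀ x ∈ Set.Ici m, HasDerivWithinAt (· ^ p) (p * x ^ (p - 1)) (Set.Ici m) x :=
    fun x hx => (Real.hasDerivAt_rpow_const (.inl (hm.trans_le hx).ne')).hasDerivWithinAt
  have hbound : ∀ x ∈ Set.Ici m, ‖p * x ^ (p - 1)‖ ≤ |p| * m ^ (p - 1) := fun x hx => by
    rw [Real.norm_eq_abs, abs_mul, abs_of_pos (Real.rpow_pos_of_pos (hm.trans_le hx) _)]
    exact mul_le_mul_of_nonneg_left (Real.rpow_le_rpow_of_nonpos hm hx (sub_nonpos.mpr hp))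
      (abs_nonneg p)
  exact (convex_Ici m).norm_image_sub_le_of_norm_hasDerivWithin_le hderiv hbound hb ha

theorem lqScore_of_pos (q : ℝ) {v : ℝ} (hv : 0 < v) : lqScore q v = q * v ^ (q - 1) := by
  rw [lqScore, Real.sign_of_pos hv, abs_of_pos hv, mul_one]

theorem lqScore_neg (q v : ℝ) : lqScore q (-v) = -lqScore q v := by
  rw [lqScore, lqScore, abs_neg, Real.sign_neg, mul_neg]

theorem abs_lqScore_le {q : ℝ} (hq : 0 ≤ q) (v : ℝ) : |lqScore q v| ≤ q * |v| ^ (q - 1) := by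
  rw [lqScore, abs_mul, abs_mul, abs_of_nonneg hq, abs_of_nonneg (by positivity)]
  refine mul_le_of_le_one_right (by positivity) ?_
  rcases Real.sign_apply_eq v with h | h | h <;> simp [h]

theorem rpow_div_two_le {r ε : ℝ} (hr : -1 ≤ r) (hε : 0 ≤ ε) : (ε / 2) ^ r ≤ 2 * ε ^ r := by
  have h2 : (2 : ℝ)⁻¹ ≤ 2 ^ r := by
    simpa [Real.rpow_neg_one] using Real.rpow_le_rpow_of_exponent_le one_le_two hr
  have hε2 : ε ^ r = 2 ^ r * (ε / 2) ^ r := by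
    rw [← Real.mul_rpow zero_le_two (by positivity), mul_div_cancel₀ ε two_ne_zero]
  rw [hε2]
  nlinarith [Real.rpow_nonneg (div_nonneg hε zero_le_two) r]

theorem abs_lqScore_add_sub_lqScore_sub_le_of_two_mul_abs_lt_of_pos {q ε u : ℝ} (hq1 : 1 ≤ q)
    (hq2 : q ≤ 2) (h : 2 * |u| < ε) :
    |lqScore q (ε + u) - lqScore q (ε - u)| ≤ 4 * q * (q - 1) * |u| * ε ^ (q - 2) := by
  have hu1 := le_abs_self u
  have hu2 := neg_abs_le u
  have hmvt : |(ε + u) ^ (q - 1) - (ε - u) ^ (q - 1)| ≤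
      |q - 1| * (ε / 2) ^ (q - 1 - 1) * |(ε + u) - (ε - u)| :=
    abs_rpow_sub_rpow_le_of_le (by linarith) (by linarith) (by linarith) (by linarith)
  rw [abs_of_nonneg (by linarith : 0 ≤ q - 1), show q - 1 - 1 = q - 2 by ring,
    show (ε + u) - (ε - u) = 2 * u by ring, abs_mul, abs_two] at hmvt
  have hhalf := rpow_div_two_le (r := q - 2) (by linarith) (by linarith : 0 ≤ ε)
  rw [lqScore_of_pos q (by linarith), lqScore_of_pos q (by linarith), ← mul_sub, abs_mul,
    abs_of_nonneg (by linarith : 0 ≤ q)]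
  calc q * |(ε + u) ^ (q - 1) - (ε - u) ^ (q - 1)|
      ≤ q * ((q - 1) * (2 * ε ^ (q - 2)) * (2 * |u|)) := by
        refine mul_le_mul_of_nonneg_left (hmvt.trans ?_) (by linarith)
        gcongr
    _ = 4 * q * (q - 1) * |u| * ε ^ (q - 2) := by ring

theorem abs_lqScore_add_sub_lqScore_sub_le_of_two_mul_abs_lt {q ε u : ℝ} (hq1 : 1 ≤ q)
    (hq2 : q ≤ 2) (h : 2 * |u| < |ε|) :
    |lqScore q (ε + u) - lqScore q (ε - u)| ≤ 4 * q * (q - 1) * |u| * |ε| ^ (q - 2) := by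
  rcases le_or_gt 0 ε with hε | hε
  · rw [abs_of_nonneg hε] at h ⊢
    exact abs_lqScore_add_sub_lqScore_sub_le_of_two_mul_abs_lt_of_pos hq1 hq2 h
  · rw [abs_of_neg hε, ← abs_neg u] at h
    have hreflect := abs_lqScore_add_sub_lqScore_sub_le_of_two_mul_abs_lt_of_pos hq1 hq2 h
    rwa [← neg_add, show -ε - -u = -(ε - u) by ring, lqScore_neg, lqScore_neg, neg_sub_neg,
      abs_sub_comm, abs_neg, ← abs_of_neg hε] at hreflect

theorem abs_lqScore_add_sub_lqScore_sub_le_of_abs_le {q ε u : ℝ} (hq1 : 1 ≤ q) (hq2 : q ≤ 2)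
    (h : |ε| ≤ 2 * |u|) :
    |lqScore q (ε + u) - lqScore q (ε - u)| ≤ 6 * q * |u| ^ (q - 1) := by
  have hbound : ∀ v, |v| ≤ 3 * |u| → |lqScore q v| ≤ 3 * q * |u| ^ (q - 1) := fun v hv =>
    calc |lqScore q v| ≤ q * |v| ^ (q - 1) := abs_lqScore_le (by linarith) v
      _ ≤ q * (3 * |u|) ^ (q - 1) := by gcongr
      _ = q * 3 ^ (q - 1) * |u| ^ (q - 1) := by
        rw [Real.mul_rpow zero_le_three (abs_nonneg u)]; ring
      _ ≤ q * 3 ^ (1 : ℝ) * |u| ^ (q - 1) := by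
        gcongr
        · norm_num
        · linarith
      _ = 3 * q * |u| ^ (q - 1) := by rw [Real.rpow_one]; ring
  calc |lqScore q (ε + u) - lqScore q (ε - u)|
      ≤ |lqScore q (ε + u)| + |lqScore q (ε - u)| := abs_sub _ _
    _ ≤ 3 * q * |u| ^ (q - 1) + 3 * q * |u| ^ (q - 1) :=
      add_le_add (hbound _ ((abs_add_le ε u).trans (by linarith)))
        (hbound _ ((abs_sub ε u).trans (by linarith)))
    _ = 6 * q * |u| ^ (q - 1) := by ring

/-- for `1 < q < 2` there exists `C_q > 0` such that for all real `ε, u`: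
(i) if `|ε| > 2|u|` then `|ψ_q(ε + u) − ψ_q(ε − u)| ≤ C_q·|u|·|ε|^{q−2}`;
(ii) if `|ε| ≤ 2|u|` then `|ψ_q(ε + u) − ψ_q(ε − u)| ≤ C_q·|u|^{q−1}`. -/
theorem stmt_11 (q : ℝ) (hq1 : 1 < q) (hq2 : q < 2) :
    ∃ C : ℝ, 0 < C ∧ ∀ ε u : ℝ,
      (2 * |u| < |ε| →
        |lqScore q (ε + u) - lqScore q (ε - u)| ≤ C * |u| * |ε| ^ (q - 2)) ∧
      (|ε| ≤ 2 * |u| →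
        |lqScore q (ε + u) - lqScore q (ε - u)| ≤ C * |u| ^ (q - 1)) := by
  refine ⟨6 * q, by linarith, fun ε u => ⟨fun hfar => ?_,
    abs_lqScore_add_sub_lqScore_sub_le_of_abs_le hq1.le hq2.le⟩⟩
  calc |lqScore q (ε + u) - lqScore q (ε - u)|
      ≤ 4 * q * (q - 1) * |u| * |ε| ^ (q - 2) :=
        abs_lqScore_add_sub_lqScore_sub_le_of_two_mul_abs_lt hq1.le hq2.le hfar
    _ ≤ 6 * q * |u| * |ε| ^ (q - 2) := by gcongr ?_ * _ * _; nlinarith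
end

section
/- Let (Ω, 𝔉, P) be a probability space, let S₀, S, S_T be measurable spaces, and let W : Ω → S₀, ζ : Ω → S, ζ′ : Ω → S, V : Ω → S_T be random elements such that W, ζ, ζ′, V are jointly (mutually) independent and ζ′ has the same distribution as ζ. Let q ∈ [1, ∞) and let f : S₀ × S × S_T → ℝ be measurable with E|f(W, ζ, V)|^q < ∞. Then ‖E[f(W,ζ,V) | σ(ζ,V)] − E[f(W,ζ,V) | σ(V)]‖_{L^q(P)} ≤ ‖f(W,ζ,V) − f(W,ζ′,V)‖_{L^q(P)}, where σ(ζ,V) and σ(V) denote the σ-algebras generated by the pair (ζ, V) and by V respectively, and E[· | ·] denotes conditional expectation. -/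
/-!
Since `(W, ζ)` is independent of `V`, conditioning `f (W, ζ, V)` on `V` integrates out the
pair `(W, ζ)`; since `(W, ζ')` is independent of `(ζ, V)` and has the law of `(W, ζ)`,
conditioning `f (W, ζ', V)` on `(ζ, V)` gives the same function of `V`. Hence
`E[f(W,ζ,V) | ζ, V] - E[f(W,ζ,V) | V] = E[f(W,ζ,V) - f(W,ζ',V) | ζ, V]`, and conditional
Jensen bounds its `L^q` norm.
-/

open MeasureTheory ProbabilityTheory

namespace ProbabilityTheory

variable {Ω α β γ : Type*} [MeasurableSpace Ω] [MeasurableSpace α] [MeasurableSpace β]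
  [MeasurableSpace γ] {μ : Measure Ω} [IsProbabilityMeasure μ]
  {X X' : Ω → α} {Y : Ω → β} {Z : Ω → γ}

lemma map_eq_of_map_prodMk_eq_prod {ρ : Measure β} [SFinite ρ] (hX : Measurable X)
    (hY : Measurable Y) (h : μ.map (fun ω => (X ω, Y ω)) = (μ.map X).prod ρ) :
    μ.map Y = ρ := by
  have : IsProbabilityMeasure (μ.map X) := Measure.isProbabilityMeasure_map hX.aemeasurable
  calc μ.map Y = (μ.map fun ω => (X ω, Y ω)).map Prod.snd :=
        (Measure.map_map measurable_snd (hX.prodMk hY)).symm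
    _ = ρ := by rw [h, Measure.map_snd_prod, measure_univ, one_smul]

lemma indepFun_of_map_prodMk_eq_prod {ρ : Measure β} [SFinite ρ] (hX : Measurable X)
    (hY : Measurable Y) (h : μ.map (fun ω => (X ω, Y ω)) = (μ.map X).prod ρ) :
    X ⟂ᵢ[μ] Y := by
  rwa [indepFun_iff_map_prod_eq_prod_map_map hX.aemeasurable hY.aemeasurable,
    map_eq_of_map_prodMk_eq_prod hX hY h]

lemma IndepFun.prodMk_left_of_prodMk_right (hX : Measurable X) (hY : Measurable Y)
    (hZ : Measurable Z) (hXYZ : X ⟂ᵢ[μ] fun ω => (Y ω, Z ω)) (hYZ : Y ⟂ᵢ[μ] Z) :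
    (fun ω => (X ω, Y ω)) ⟂ᵢ[μ] Z := by
  have hXY : X ⟂ᵢ[μ] Y := hXYZ.comp measurable_id measurable_fst
  rw [indepFun_iff_map_prod_eq_prod_map_map (hX.prodMk hY).aemeasurable hZ.aemeasurable,
    hXY.map_prod_eq_prod_map_map hX.aemeasurable hY.aemeasurable]
  calc μ.map (fun ω => ((X ω, Y ω), Z ω))
      = (μ.map fun ω => (X ω, Y ω, Z ω)).map MeasurableEquiv.prodAssoc.symm :=
        (Measure.map_map MeasurableEquiv.prodAssoc.symm.measurable
          (hX.prodMk (hY.prodMk hZ))).symm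
    _ = ((μ.map X).prod ((μ.map Y).prod (μ.map Z))).map MeasurableEquiv.prodAssoc.symm := by
        rw [hXYZ.map_prod_eq_prod_map_map hX.aemeasurable (hY.prodMk hZ).aemeasurable,
          hYZ.map_prod_eq_prod_map_map hY.aemeasurable hZ.aemeasurable]
    _ = ((μ.map X).prod (μ.map Y)).prod (μ.map Z) :=
        ((measurePreserving_prodAssoc _ _ _).symm _).map_eq

lemma IndepFun.prodMk_prodMk_of_nested {δ : Type*} [MeasurableSpace δ] {W : Ω → δ}
    (hW : Measurable W) (hX : Measurable X) (hY : Measurable Y) (hZ : Measurable Z)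
    (hW_XYZ : W ⟂ᵢ[μ] fun ω => (X ω, Y ω, Z ω))
    (hX_YZ : X ⟂ᵢ[μ] fun ω => (Y ω, Z ω)) (hY_Z : Y ⟂ᵢ[μ] Z) :
    (fun ω => (W ω, Y ω)) ⟂ᵢ[μ] fun ω => (X ω, Z ω) :=
  (hW_XYZ.comp measurable_id
      (by fun_prop : Measurable fun t : α × β × γ => (t.2.1, t.1, t.2.2))
    ).prodMk_left_of_prodMk_right hW hY (hX.prodMk hZ)
    ((hX_YZ.comp measurable_id measurable_swap).prodMk_left_of_prodMk_right hX hZ hY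
      hY_Z.symm).symm

variable {E : Type*} [NormedAddCommGroup E] [NormedSpace ℝ E] [CompleteSpace E]

theorem IndepFun.condExp_comap_ae_eq_integral (hX : Measurable X) (hY : Measurable Y)
    (hXY : X ⟂ᵢ[μ] Y) {h : α × β → E} (hh : StronglyMeasurable h)
    (hint : Integrable (fun ω => h (X ω, Y ω)) μ) :
    μ[fun ω => h (X ω, Y ω) | MeasurableSpace.comap Y inferInstance]
      =ᵐ[μ] fun ω => ∫ x, h (x, Y ω) ∂μ.map X := by
  set g : β → E := fun y => ∫ x, h (x, y) ∂μ.map X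
  -- Ordering the pair as `(Y, X)` makes `setIntegral_prod` integrate over `x` innermost.
  have hlaw : μ.map (fun ω => (Y ω, X ω)) = (μ.map Y).prod (μ.map X) :=
    hXY.symm.map_prod_eq_prod_map_map hY.aemeasurable hX.aemeasurable
  have hswap : StronglyMeasurable fun z : β × α => h z.swap :=
    hh.comp_measurable measurable_swap
  have hint_swap : Integrable (fun z : β × α => h z.swap) ((μ.map Y).prod (μ.map X)) := by
    rw [← hlaw]
    exact (integrable_map_measure hswap.aestronglyMeasurable (hY.prodMk hX).aemeasurable).2 hint
  have hg : StronglyMeasurable g := hh.integral_prod_left'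
  have hgY : Integrable (fun ω => g (Y ω)) μ :=
    (integrable_map_measure hg.aestronglyMeasurable hY.aemeasurable).1
      hint_swap.integral_prod_left
  refine (ae_eq_condExp_of_forall_setIntegral_eq hY.comap_le hint
    (fun s _ _ => hgY.integrableOn) ?_
    (hg.comp_measurable (comap_measurable Y)).aestronglyMeasurable).symm
  rintro _ ⟨B, hB, rfl⟩ -
  calc ∫ ω in Y ⁻¹' B, g (Y ω) ∂μ = ∫ y in B, g y ∂μ.map Y :=
        (setIntegral_map hB hg.aestronglyMeasurable hY.aemeasurable).symm
    _ = ∫ z in B ×ˢ Set.univ, h z.swap ∂(μ.map Y).prod (μ.map X) := by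
        rw [setIntegral_prod _ hint_swap.integrableOn, Measure.restrict_univ]
        rfl
    _ = ∫ ω in Y ⁻¹' B, h (X ω, Y ω) ∂μ := by
        rw [← hlaw, setIntegral_map (hB.prod MeasurableSet.univ) hswap.aestronglyMeasurable
          (hY.prodMk hX).aemeasurable, Set.mk_preimage_prod, Set.preimage_univ, Set.inter_univ]
        rfl

theorem condExp_comap_ae_eq_condExp_comap_prodMk_of_identDistrib (hX : Measurable X)
    (hX' : Measurable X') (hY : Measurable Y) (hZ : Measurable Z)
    (hXX' : IdentDistrib X X' μ μ) (hXZ : X ⟂ᵢ[μ] Z)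
    (hX'YZ : X' ⟂ᵢ[μ] fun ω => (Y ω, Z ω)) {h : α × γ → E} (hh : StronglyMeasurable h)
    (hint : Integrable (fun ω => h (X ω, Z ω)) μ)
    (hint' : Integrable (fun ω => h (X' ω, Z ω)) μ) :
    μ[fun ω => h (X ω, Z ω) | MeasurableSpace.comap Z inferInstance]
      =ᵐ[μ] μ[fun ω => h (X' ω, Z ω) |
        MeasurableSpace.comap (fun ω => (Y ω, Z ω)) inferInstance] := by
  have hXZ_eq := hXZ.condExp_comap_ae_eq_integral hX hZ hh hint
  have hX'YZ_eq := hX'YZ.condExp_comap_ae_eq_integral hX' (hY.prodMk hZ)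
    (h := fun p => h (p.1, p.2.2)) (hh.comp_measurable (by fun_prop)) hint'
  rw [← hXX'.map_eq] at hX'YZ_eq
  exact hXZ_eq.trans hX'YZ_eq.symm

end ProbabilityTheory

lemma MeasureTheory.eLpNorm_condExp_sub_le_of_ae_eq {Ω E : Type*} {m m₀ : MeasurableSpace Ω}
    {μ : Measure Ω} [NormedAddCommGroup E] [NormedSpace ℝ E] [CompleteSpace E]
    {F F' G : Ω → E} {p : ENNReal} (hp : 1 ≤ p) (hF : Integrable F μ) (hF' : Integrable F' μ)
    (hG : G =ᵐ[μ] μ[F' | m]) :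
    eLpNorm (μ[F | m] - G) p μ ≤ eLpNorm (F - F') p μ := by
  calc eLpNorm (μ[F | m] - G) p μ = eLpNorm (μ[F - F' | m]) p μ := by
        refine eLpNorm_congr_ae ?_
        filter_upwards [condExp_sub hF hF' m, hG] with ω hsub hGω
        simp only [Pi.sub_apply] at hsub ⊢
        rw [hsub, hGω]
    _ ≤ eLpNorm (F - F') p μ := eLpNorm_condExp_le_eLpNorm _ hp

/-- conditional-Jensen projection bound. Let `W, ζ, ζ′, V` be jointly
independent random elements (expressed by the law of the quadruple being the product of
the marginal laws), with `ζ′` distributed as `ζ`. Let `q ∈ [1, ∞)` and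
`f : S₀ × S × S_T → ℝ` measurable with `E|f(W,ζ,V)|^q < ∞`. Then
`‖E[f(W,ζ,V) | σ(ζ,V)] − E[f(W,ζ,V) | σ(V)]‖_{L^q} ≤ ‖f(W,ζ,V) − f(W,ζ′,V)‖_{L^q}`. -/
theorem stmt_19 {Ω : Type*} [MeasurableSpace Ω] (P : Measure Ω) [IsProbabilityMeasure P]
    {S₀ S ST : Type*} [MeasurableSpace S₀] [MeasurableSpace S] [MeasurableSpace ST]
    (W : Ω → S₀) (ζ ζ' : Ω → S) (V : Ω → ST)
    (hW : Measurable W) (hζ : Measurable ζ) (hζ' : Measurable ζ') (hV : Measurable V)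
    (hindep : P.map (fun ω => (W ω, ζ ω, ζ' ω, V ω))
      = (P.map W).prod ((P.map ζ).prod ((P.map ζ').prod (P.map V))))
    (hid : P.map ζ' = P.map ζ)
    (q : ℝ) (hq : 1 ≤ q)
    (f : S₀ × S × ST → ℝ) (hf : Measurable f)
    (hLq : MemLp (fun ω => f (W ω, ζ ω, V ω)) (ENNReal.ofReal q) P) :
    eLpNorm
        (MeasureTheory.condExp
            (MeasurableSpace.comap (fun ω => (ζ ω, V ω)) inferInstance) P
            (fun ω => f (W ω, ζ ω, V ω))
          - MeasureTheory.condExp (MeasurableSpace.comap V inferInstance) P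
            (fun ω => f (W ω, ζ ω, V ω)))
        (ENNReal.ofReal q) P
      ≤ eLpNorm (fun ω => f (W ω, ζ ω, V ω) - f (W ω, ζ' ω, V ω))
          (ENNReal.ofReal q) P := by
  have hq' : 1 ≤ ENNReal.ofReal q := by simpa using hq
  have hζζ'V := hζ.prodMk (hζ'.prodMk hV)
  have hW_ζζ'V := indepFun_of_map_prodMk_eq_prod hW hζζ'V hindep
  have hlaw := map_eq_of_map_prodMk_eq_prod hW hζζ'V hindep
  have hζ_ζ'V := indepFun_of_map_prodMk_eq_prod hζ (hζ'.prodMk hV) hlaw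
  have hζ'_V := indepFun_of_map_prodMk_eq_prod hζ' hV
    (map_eq_of_map_prodMk_eq_prod hζ (hζ'.prodMk hV) hlaw)
  have hWζ_V : (fun ω => (W ω, ζ ω)) ⟂ᵢ[P] V :=
    (hW_ζζ'V.comp measurable_id (by fun_prop : Measurable fun t : S × S × ST => (t.1, t.2.2))
      ).prodMk_left_of_prodMk_right hW hζ hV (hζ_ζ'V.comp measurable_id measurable_snd)
  have hWζ'_ζV := hW_ζζ'V.prodMk_prodMk_of_nested hW hζ hζ' hV hζ_ζ'V hζ'_V
  have hWζ_Wζ' : IdentDistrib (fun ω => (W ω, ζ ω)) (fun ω => (W ω, ζ' ω)) P P :=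
    (IdentDistrib.refl hW.aemeasurable).prodMk ⟨hζ.aemeasurable, hζ'.aemeasurable, hid.symm⟩
      (hW_ζζ'V.comp measurable_id measurable_fst)
      (hW_ζζ'V.comp measurable_id (by fun_prop : Measurable fun t : S × S × ST => t.2.1))
  have hF := hLq.integrable hq'
  have hF' : Integrable (fun ω => f (W ω, ζ' ω, V ω)) P :=
    ((hWζ_Wζ'.prodMk (IdentDistrib.refl hV.aemeasurable) hWζ_V
      (hWζ'_ζV.comp measurable_id measurable_snd)).comp
      (by fun_prop : Measurable fun z : (S₀ × S) × ST => f (z.1.1, z.1.2, z.2))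
      ).integrable_iff.1 hF
  exact eLpNorm_condExp_sub_le_of_ae_eq hq' hF hF'
    (condExp_comap_ae_eq_condExp_comap_prodMk_of_identDistrib (hW.prodMk hζ) (hW.prodMk hζ')
      hζ hV hWζ_Wζ' hWζ_V hWζ'_ζV (h := fun z => f (z.1.1, z.1.2, z.2)) (by fun_prop) hF hF')
end
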